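/- Unextendibility of the Schmidt/Fourier assemblage against non-signaling adversaries: let d ≥ 1, let α : Fin d → ℂ with α_j ≠ 0 for all j and ∑_j |α_j|² = 1, let |ψ⟩ := ∑_j α_j |j⟩ ∈ ℂ^d, and let Z(j) be the diagonal unitary with Z(j)|k⟩ = e^{2πijk/d}|k⟩. Let m ≥ 1 and let ω^0,…,ω^{d−1} and τ^0,…,τ^{d−1} be positive semidefinite m×m complex matrices of trace 1 satisfying ∑_j |α_j|²·|j⟩⟨j| ⊗ ω^j = ∑_j (1/d)·Z(j)†|ψ⟩⟨ψ|Z(j) ⊗ τ^j (as matrices indexed by Fin d × Fin m). Then ω^0 = ω^1 = ⋯ = ω^{d−1} = τ^0 = τ^1 = ⋯ = τ^{d−1}. -/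
import Mathlib


open scoped BigOperators
open Matrix Kronecker
open scoped ComplexOrder

noncomputable section

/-- Outer product `|v⟩⟨w|`. -/
def outer {n : Type*} (v w : n → ℂ) : Matrix n n ℂ :=
  Matrix.of fun i j => v i * (starRingEnd ℂ) (w j)

/-- The `j`-th standard basis vector of `ℂ^d`. -/
def stdKet {d : ℕ} (j : Fin d) : Fin d → ℂ := fun k => if k = j then 1 else 0

/-- The diagonal unitary `Z(j)` with `Z(j)|k⟩ = e^{2πijk/d}|k⟩`. -/
noncomputable def Zmat {d : ℕ} (j : Fin d) : Matrix (Fin d) (Fin d) ℂ :=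
  Matrix.diagonal fun k =>
    Complex.exp (2 * (Real.pi : ℂ) * Complex.I * ((j : ℕ) : ℂ) * ((k : ℕ) : ℂ) / (d : ℂ))

/-- Unextendibility of the Schmidt/Fourier assemblage against non-signaling adversaries. -/
theorem schmidt_fourier_unextendible {d m : ℕ} (hd : 1 ≤ d) (hm : 1 ≤ m)
    (α : Fin d → ℂ) (hα : ∀ j, α j ≠ 0)
    (hnorm : ∑ j, Complex.normSq (α j) = 1)
    (ω τ : Fin d → Matrix (Fin m) (Fin m) ℂ)
    (hω : ∀ j, (ω j).PosSemidef) (hτ : ∀ j, (τ j).PosSemidef)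
    (hωt : ∀ j, (ω j).trace = 1) (hτt : ∀ j, (τ j).trace = 1)
    (heq : ∑ j, ((Complex.normSq (α j) : ℂ) • outer (stdKet j) (stdKet j)) ⊗ₖ ω j
         = ∑ j, ((d : ℂ)⁻¹ • ((Zmat j)ᴴ * outer α α * Zmat j)) ⊗ₖ τ j) :
    (∀ j k, ω j = ω k) ∧ (∀ j k, τ j = τ k) ∧ (∀ j k, ω j = τ k) := by
  have hdne : d ≠ 0 := by omega
  have hdC : (d : ℂ) ≠ 0 := Nat.cast_ne_zero.mpr hdne
  set u : ℂ := Complex.exp (2 * (Real.pi : ℂ) * Complex.I / d) with hu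
  have hprim : IsPrimitiveRoot u d := Complex.isPrimitiveRoot_exp d hdne
  have hu0 : u ≠ 0 := Complex.exp_ne_zero _
  have hexp : ∀ j k : Fin d,
      Complex.exp (2 * (Real.pi : ℂ) * Complex.I * ((j : ℕ) : ℂ) * ((k : ℕ) : ℂ) / (d : ℂ))
        = u ^ ((j : ℕ) * (k : ℕ)) := by
    intro j k
    rw [hu, ← Complex.exp_nat_mul]
    congr 1; push_cast; ring
  have hconj : ∀ j k : Fin d,
      (starRingEnd ℂ) (Complex.exp (2 * (Real.pi : ℂ) * Complex.I * ((j : ℕ) : ℂ) * ((k : ℕ) : ℂ) / (d : ℂ)))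
        = (u ^ ((j : ℕ) * (k : ℕ)))⁻¹ := by
    intro j k
    have hc : (starRingEnd ℂ) (2 * (Real.pi : ℂ) * Complex.I * ((j : ℕ) : ℂ) * ((k : ℕ) : ℂ) / (d : ℂ))
        = -(2 * (Real.pi : ℂ) * Complex.I * ((j : ℕ) : ℂ) * ((k : ℕ) : ℂ) / (d : ℂ)) := by
      simp only [map_div₀, _root_.map_mul, map_ofNat, Complex.conj_I, Complex.conj_natCast,
        Complex.conj_ofReal]
      ring
    rw [← Complex.exp_conj, hc, Complex.exp_neg, hexp j k]
  -- key entrywise equation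
  have key : ∀ (a b : Fin d) (p q : Fin m),
      (if a = b then (Complex.normSq (α b) : ℂ) * ω b p q else 0)
        = (d : ℂ)⁻¹ * (α a * (starRingEnd ℂ) (α b)) *
            ∑ x : Fin d, (u ^ ((x : ℕ) * (a : ℕ)))⁻¹ * u ^ ((x : ℕ) * (b : ℕ)) * τ x p q := by
    intro a b p q
    have h := congrFun (congrFun heq (a, p)) (b, q)
    simp only [Matrix.sum_apply, Matrix.kroneckerMap_apply, Matrix.smul_apply, outer, stdKet,
      Zmat, Matrix.diagonal_conjTranspose, Matrix.diagonal_mul, Matrix.mul_diagonal,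
      Matrix.of_apply, smul_eq_mul, Pi.star_apply, RCLike.star_def, _root_.map_one,
      _root_.map_zero, mul_ite, mul_one, mul_zero, ite_mul, zero_mul, one_mul,
      Finset.sum_ite_eq, Finset.mem_univ, if_true, apply_ite (starRingEnd ℂ)] at h
    rw [h, Finset.mul_sum]
    refine Finset.sum_congr rfl fun x _ => ?_
    rw [hconj, hexp]; ring
  -- diagonal case: all ω equal the τ-average
  have hωval : ∀ (a : Fin d) (p q : Fin m), ω a p q = (d : ℂ)⁻¹ * ∑ j, τ j p q := by
    intro a p q
    have h := key a a p q
    rw [if_pos rfl] at h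
    have hsum : ∑ x : Fin d, (u ^ ((x : ℕ) * (a : ℕ)))⁻¹ * u ^ ((x : ℕ) * (a : ℕ)) * τ x p q
        = ∑ x : Fin d, τ x p q :=
      Finset.sum_congr rfl fun x _ => by
        rw [inv_mul_cancel₀ (pow_ne_zero _ hu0), one_mul]
    rw [hsum, Complex.mul_conj] at h
    have hns : ((Complex.normSq (α a) : ℂ)) ≠ 0 :=
      Complex.ofReal_ne_zero.mpr (Complex.normSq_pos.mpr (hα a)).ne'
    have h2 : (Complex.normSq (α a) : ℂ) * ω a p q
        = (Complex.normSq (α a) : ℂ) * ((d : ℂ)⁻¹ * ∑ j, τ j p q) := by rw [h]; ring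
    exact mul_left_cancel₀ hns h2
  -- off-diagonal case: Fourier coefficients vanish
  have hF : ∀ (a b : Fin d), a ≠ b → ∀ p q : Fin m,
      ∑ x : Fin d, (u ^ ((x : ℕ) * (a : ℕ)))⁻¹ * u ^ ((x : ℕ) * (b : ℕ)) * τ x p q = 0 := by
    intro a b hab p q
    have h := key a b p q
    rw [if_neg hab] at h
    have hne : (d : ℂ)⁻¹ * (α a * (starRingEnd ℂ) (α b)) ≠ 0 :=
      mul_ne_zero (inv_ne_zero hdC)
        (mul_ne_zero (hα a) ((map_ne_zero (starRingEnd ℂ)).mpr (hα b)))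
    exact (mul_eq_zero.mp h.symm).resolve_left hne
  -- orthogonality of characters
  have horth : ∀ c : ℤ, ¬ ((d : ℤ) ∣ c) → ∑ a : Fin d, (u ^ c) ^ (a : ℕ) = 0 := by
    intro c hc
    have hz1 : u ^ c ≠ 1 := fun h1 => hc ((hprim.zpow_eq_one_iff_dvd c).mp h1)
    have hzd : (u ^ c) ^ d = 1 := by
      rw [← zpow_natCast (u ^ c), ← _root_.zpow_mul, mul_comm, _root_.zpow_mul, zpow_natCast,
        hprim.pow_eq_one, _root_.one_zpow]
    rw [Fin.sum_univ_eq_sum_range (fun i => (u ^ c) ^ i), geom_sum_eq hz1, hzd, sub_self,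
      zero_div]
  have e2 : ∀ l x : Fin d,
      ∑ a : Fin d, u ^ ((l : ℕ) * (a : ℕ)) * (u ^ ((x : ℕ) * (a : ℕ)))⁻¹
        = if x = l then (d : ℂ) else 0 := by
    intro l x
    have hterm : ∀ a : Fin d, u ^ ((l : ℕ) * (a : ℕ)) * (u ^ ((x : ℕ) * (a : ℕ)))⁻¹
        = (u ^ (((l : ℕ) : ℤ) - ((x : ℕ) : ℤ))) ^ (a : ℕ) := by
      intro a
      rw [← zpow_natCast u ((l : ℕ) * (a : ℕ)), ← zpow_natCast u ((x : ℕ) * (a : ℕ)),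
        ← _root_.zpow_neg, ← zpow_add₀ hu0, ← zpow_natCast (u ^ (((l : ℕ) : ℤ) - ((x : ℕ) : ℤ))),
        ← _root_.zpow_mul]
      congr 1; push_cast; ring
    rcases eq_or_ne x l with rfl | hxl
    · simp only [hterm, sub_self, zpow_zero, one_pow]
      simp
    · rw [if_neg hxl, Finset.sum_congr rfl fun a _ => hterm a]
      apply horth
      intro hdvd
      have h0 : ((l : ℕ) : ℤ) - ((x : ℕ) : ℤ) = 0 := by
        refine Int.eq_zero_of_dvd_of_natAbs_lt_natAbs hdvd ?_
        have h1 : (l : ℕ) < d := l.isLt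
        have h2 : (x : ℕ) < d := x.isLt
        omega
      have : (l : ℕ) = (x : ℕ) := by omega
      exact hxl (Fin.ext this.symm)
  -- all τ equal the average
  have hτval : ∀ (l : Fin d) (p q : Fin m), τ l p q = (d : ℂ)⁻¹ * ∑ j, τ j p q := by
    intro l p q
    have e1 : ∀ a : Fin d, ∑ x : Fin d, (u ^ ((x : ℕ) * (a : ℕ)))⁻¹ * τ x p q
        = if a = (⟨0, hd⟩ : Fin d) then ∑ j, τ j p q else 0 := by
      intro a
      rcases eq_or_ne a (⟨0, hd⟩ : Fin d) with rfl | hab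
      · rw [if_pos rfl]
        refine Finset.sum_congr rfl fun x _ => ?_
        norm_num
      · rw [if_neg hab]
        have h := hF a ⟨0, hd⟩ hab p q
        simpa using h
    have hbig : (d : ℂ) * τ l p q = ∑ j, τ j p q := by
      calc (d : ℂ) * τ l p q
          = ∑ x : Fin d, (if x = l then (d : ℂ) else 0) * τ x p q := by
            simp [ite_mul]
        _ = ∑ x : Fin d,
              (∑ a : Fin d, u ^ ((l : ℕ) * (a : ℕ)) * (u ^ ((x : ℕ) * (a : ℕ)))⁻¹) * τ x p q :=
            Finset.sum_congr rfl fun x _ => by rw [e2 l x]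
        _ = ∑ a : Fin d, u ^ ((l : ℕ) * (a : ℕ)) *
              ∑ x : Fin d, (u ^ ((x : ℕ) * (a : ℕ)))⁻¹ * τ x p q := by
            simp_rw [Finset.sum_mul, Finset.mul_sum]
            rw [Finset.sum_comm]
            exact Finset.sum_congr rfl fun a _ => Finset.sum_congr rfl fun x _ => by ring
        _ = ∑ a : Fin d, u ^ ((l : ℕ) * (a : ℕ)) *
              (if a = (⟨0, hd⟩ : Fin d) then ∑ j, τ j p q else 0) :=
            Finset.sum_congr rfl fun a _ => by rw [e1 a]
        _ = ∑ j, τ j p q := by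
            simp
    field_simp
    linear_combination hbig
  refine ⟨fun j k => ?_, fun j k => ?_, fun j k => ?_⟩ <;> ext p q
  · rw [hωval j p q, hωval k p q]
  · rw [hτval, hτval]
  · rw [hωval, hτval]
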